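/- Let d ≥ 2, L ≥ 1, m_ℓ ≥ 1 for ℓ ∈ [L], M := ∑_ℓ m_ℓ, U > 0, ε > 0, and let T be the ⌈2d/ε⌉-th largest value of the multiset {U·m_1, …, U·m_L} (with T := 0 if ⌈2d/ε⌉ > L). Then the minimum of the worst-case error functional E^{(d)} over all admissible clipping strategies equals (1/M)·(∑_{ℓ≤L} max{U·m_ℓ − T, 0} + 2dT/ε). -/

import Mathlib

/-!
If user `ℓ`'s contributions sum to at most `S`, the first term of `E` is at least
`max (U m_ℓ - S) 0` for that user, so `E ≥ (1/M) f(S)` where `S` is the largest per-user total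
and `f(S) = ∑_ℓ max (U m_ℓ - S) 0 + (2d/ε) S`; the strategy `a = 0`, `b_j^{(ℓ)} = min(S, U m_ℓ)/m_ℓ`
attains this bound. The function `f` is convex and piecewise linear with slope
`2d/ε - #{ℓ | S < U m_ℓ}`, hence minimised on `S ≥ 0` at the `⌈2d/ε⌉`-th largest `U m_ℓ`.
-/

open Finset

noncomputable def kthLargest {L : ℕ} (v : Fin L → ℝ) (k : ℕ) : ℝ :=
  (((Finset.univ.val.map v).sort (· ≤ ·)).reverse).getD (k - 1) 0

/-- An admissible clipping strategy: `0 ≤ a ℓ j ≤ b ℓ j ≤ U` for every user `ℓ`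
and sample index `j`. -/
def Admissible {L : ℕ} (m : Fin L → ℕ) (U : ℝ)
    (a b : (ℓ : Fin L) → Fin (m ℓ) → ℝ) : Prop :=
  ∀ ℓ j, 0 ≤ a ℓ j ∧ a ℓ j ≤ b ℓ j ∧ b ℓ j ≤ U

/-- The worst-case error functional `E^(d)` of a clipping strategy (dimension `d ≥ 2`). -/
noncomputable def Ed {L : ℕ} (d : ℕ) (m : Fin L → ℕ) (U ε : ℝ)
    (a b : (ℓ : Fin L) → Fin (m ℓ) → ℝ) : ℝ :=
  (1 / ∑ ℓ, (m ℓ : ℝ)) *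
    ((∑ ℓ, ∑ j, max (a ℓ j) (U - b ℓ j)) +
      (2 * (d : ℝ) / ε) * sSup (Set.range fun ℓ => ∑ j, b ℓ j))

namespace List

variable {α : Type*} [LinearOrder α] {l : List α} {n : ℕ}

theorem Pairwise.length_sub_le_countP_getElem_le (hl : l.Pairwise (· ≤ ·))
    (hn : n < l.length) : l.length - n ≤ l.countP (fun x => l[n] ≤ x) := by
  have hdrop : ∀ x ∈ l.drop n, l[n] ≤ x := by
    have hsorted := hl.drop (i := n)
    rw [drop_eq_getElem_cons hn, pairwise_cons] at hsorted
    rw [drop_eq_getElem_cons hn]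
    rintro x (_ | ⟨_, hx⟩)
    exacts [le_rfl, hsorted.1 x hx]
  have h := (drop_sublist n l).countP_le (p := fun x => l[n] ≤ x)
  rwa [countP_eq_length.2 (by simpa using hdrop), length_drop] at h

theorem Pairwise.countP_getElem_lt_le (hl : l.Pairwise (· ≤ ·)) (hn : n < l.length) :
    l.countP (fun x => l[n] < x) ≤ l.length - n - 1 := by
  obtain ⟨T, hT⟩ : ∃ T, l[n] = T := ⟨_, rfl⟩
  have hsplit : l = l.take n ++ T :: l.drop (n + 1) := by
    rw [← hT, ← drop_eq_getElem_cons hn, take_append_drop]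
  have htake : ∀ x ∈ l.take n, x ≤ T := by
    rw [hsplit, pairwise_append] at hl
    exact fun x hx => hl.2.2 x hx T mem_cons_self
  simp only [hT]
  calc l.countP (fun x => T < x)
      = (l.take n).countP (fun x => T < x) + (T :: l.drop (n + 1)).countP
          (fun x => T < x) := by conv_lhs => rw [hsplit, countP_append]
    _ = (l.drop (n + 1)).countP (fun x => T < x) := by
        rw [countP_eq_zero.2 (by simpa using htake), countP_cons]
        simp
    _ ≤ l.length - n - 1 := countP_le_length.trans (by rw [length_drop]; omega)

end List

section kthLargest

variable {L : ℕ} (v : Fin L → ℝ) {k : ℕ}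

noncomputable def sortedValues : List ℝ := (Finset.univ.val.map v).sort (· ≤ ·)

theorem kthLargest_eq_getD : kthLargest v k = (sortedValues v).reverse.getD (k - 1) 0 := rfl

theorem length_sortedValues : (sortedValues v).length = L := by
  simp [sortedValues]

theorem card_filter_eq_countP_sortedValues (p : ℝ → Prop) [DecidablePred p] :
    #{ℓ | p (v ℓ)} = (sortedValues v).countP (fun x => decide (p x)) := by
  rw [← Multiset.coe_countP, sortedValues, Multiset.sort_eq, Multiset.countP_map]
  rfl

theorem kthLargest_eq_zero_of_lt (h : L < k) : kthLargest v k = 0 := by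
  rw [kthLargest_eq_getD]
  exact List.getD_eq_default _ _ (by rw [List.length_reverse, length_sortedValues]; omega)

theorem kthLargest_eq_zero_or_mem_range : kthLargest v k = 0 ∨ kthLargest v k ∈ Set.range v := by
  rcases lt_or_ge (k - 1) L with h | h
  · right
    have hlt : k - 1 < (sortedValues v).reverse.length := by
      rwa [List.length_reverse, length_sortedValues]
    have hmem := List.getElem_mem hlt
    rw [← List.getD_eq_getElem _ 0, ← kthLargest_eq_getD, List.mem_reverse, sortedValues, Multiset.mem_sort,
      Multiset.mem_map] at hmem
    obtain ⟨ℓ, -, hℓ⟩ := hmem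
    exact ⟨ℓ, hℓ⟩
  · left
    rw [kthLargest_eq_getD]
    exact List.getD_eq_default _ _ (by rwa [List.length_reverse, length_sortedValues])

theorem kthLargest_eq_getElem (hk : 1 ≤ k) (hkL : k ≤ L) :
    kthLargest v k = (sortedValues v)[L - k]'(by rw [length_sortedValues]; omega) := by
  rw [kthLargest_eq_getD, List.getD_eq_getElem _ _ (by simp [length_sortedValues]; omega),
    List.getElem_reverse]
  congr 1
  rw [length_sortedValues]
  omega

theorem le_card_filter_kthLargest_le (hk : 1 ≤ k) (hkL : k ≤ L) :
    k ≤ #{ℓ | kthLargest v k ≤ v ℓ} := by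
  have h := (Multiset.pairwise_sort _ _).length_sub_le_countP_getElem_le
    (l := sortedValues v) (n := L - k) (by rw [length_sortedValues]; omega)
  rw [card_filter_eq_countP_sortedValues, kthLargest_eq_getElem v hk hkL]
  have := length_sortedValues v
  omega

theorem card_filter_kthLargest_lt_lt (hk : 1 ≤ k) : #{ℓ | kthLargest v k < v ℓ} < k := by
  rcases le_or_gt k L with hkL | hLk
  · have h := (Multiset.pairwise_sort _ _).countP_getElem_lt_le
      (l := sortedValues v) (n := L - k) (by rw [length_sortedValues]; omega)
    rw [card_filter_eq_countP_sortedValues, kthLargest_eq_getElem v hk hkL]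
    have := length_sortedValues v
    omega
  · calc #{ℓ | kthLargest v k < v ℓ} ≤ L := (card_filter_le _ _).trans (by simp)
      _ < k := hLk


theorem kthLargest_nonneg (hv : ∀ ℓ, 0 ≤ v ℓ) : 0 ≤ kthLargest v k := by
  rcases kthLargest_eq_zero_or_mem_range v (k := k) with h | ⟨ℓ, h⟩
  · exact h.ge
  · exact h ▸ hv ℓ

theorem exists_kthLargest_le (hL : 0 < L) (hv : ∀ ℓ, 0 ≤ v ℓ) : ∃ ℓ, kthLargest v k ≤ v ℓ := by
  rcases kthLargest_eq_zero_or_mem_range v (k := k) with h | ⟨ℓ, h⟩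
  · exact ⟨⟨0, hL⟩, h ▸ hv _⟩
  · exact ⟨ℓ, h.ge⟩

end kthLargest

section thresholdCost

variable {ι : Type*} [Fintype ι] (v : ι → ℝ) (c : ℝ) {S T : ℝ}

def thresholdCost (S : ℝ) : ℝ := ∑ i, max (v i - S) 0 + c * S

theorem thresholdCost_le_of_le (hTS : T ≤ S) (hc : (#{i | T < v i} : ℝ) ≤ c) :
    thresholdCost v c T ≤ thresholdCost v c S := by
  have hpt : ∀ i, max (v i - T) 0 ≤ max (v i - S) 0 + if T < v i then S - T else 0 := by
    intro i
    split_ifs with h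
    · exact max_le (by linarith [le_max_left (v i - S) 0])
        (by linarith [le_max_right (v i - S) 0])
    · rw [max_eq_right (by linarith [not_lt.1 h]), add_zero]
      exact le_max_right _ _
  have hsum := sum_le_sum fun i (_ : i ∈ univ) => hpt i
  rw [sum_add_distrib, ← sum_filter, sum_const, nsmul_eq_mul] at hsum
  unfold thresholdCost
  nlinarith [mul_le_mul_of_nonneg_right hc (sub_nonneg.2 hTS)]

theorem thresholdCost_le_of_ge (hST : S ≤ T) (hc : c ≤ #{i | T ≤ v i}) :
    thresholdCost v c T ≤ thresholdCost v c S := by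
  have hpt : ∀ i, max (v i - T) 0 + (if T ≤ v i then T - S else 0) ≤ max (v i - S) 0 := by
    intro i
    split_ifs with h
    · rw [max_eq_left (sub_nonneg.2 h)]
      linarith [le_max_left (v i - S) 0]
    · rw [max_eq_right (by linarith [not_le.1 h]), add_zero]
      exact le_max_right _ _
  have hsum := sum_le_sum fun i (_ : i ∈ univ) => hpt i
  rw [sum_add_distrib, ← sum_filter, sum_const, nsmul_eq_mul] at hsum
  unfold thresholdCost
  nlinarith [mul_le_mul_of_nonneg_right hc (sub_nonneg.2 hST)]

end thresholdCost

theorem thresholdCost_kthLargest_le {L : ℕ} (v : Fin L → ℝ) {c S : ℝ} (hc : 0 < c)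
    (hS : 0 ≤ S) : thresholdCost v c (kthLargest v ⌈c⌉₊) ≤ thresholdCost v c S := by
  set k := ⌈c⌉₊
  have hk : 1 ≤ k := Nat.ceil_pos.2 hc
  rcases le_or_gt (kthLargest v k) S with hTS | hST
  · apply thresholdCost_le_of_le v c hTS
    have hcard : (#{ℓ | kthLargest v k < v ℓ} : ℝ) + 1 ≤ k := by
      exact_mod_cast card_filter_kthLargest_lt_lt v hk
    linarith [Nat.ceil_lt_add_one hc.le]
  · have hkL : k ≤ L := by
      by_contra! hLk
      rw [kthLargest_eq_zero_of_lt v hLk] at hST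
      linarith
    apply thresholdCost_le_of_ge v c hST.le
    calc c ≤ k := Nat.le_ceil c
      _ ≤ _ := by exact_mod_cast le_card_filter_kthLargest_le v hk hkL

theorem max_card_mul_sub_sum_le_sum_max {ι : Type*} [Fintype ι] {a : ι → ℝ}
    (ha : ∀ i, 0 ≤ a i) (b : ι → ℝ) (U : ℝ) :
    max (Fintype.card ι * U - ∑ i, b i) 0 ≤ ∑ i, max (a i) (U - b i) := by
  refine max_le ?_ (sum_nonneg fun i _ => (ha i).trans (le_max_left _ _))
  rw [← card_univ, ← nsmul_eq_mul, ← sum_const, ← sum_sub_distrib]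
  exact sum_le_sum fun i _ => le_max_right _ _

section clipping

variable {L d : ℕ} {m : Fin L → ℕ} {U ε : ℝ}

theorem thresholdCost_sSup_le_Ed {a b : (ℓ : Fin L) → Fin (m ℓ) → ℝ}
    (hab : Admissible m U a b) :
    (1 / ∑ ℓ, (m ℓ : ℝ)) * thresholdCost (fun ℓ => U * m ℓ) (2 * d / ε)
      (sSup (Set.range fun ℓ => ∑ j, b ℓ j)) ≤ Ed d m U ε a b := by
  set S := sSup (Set.range fun ℓ => ∑ j, b ℓ j)
  have hbS : ∀ ℓ, ∑ j, b ℓ j ≤ S := fun ℓ =>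
    le_csSup (Set.finite_range _).bddAbove ⟨ℓ, rfl⟩
  have hsum : ∀ ℓ, max (U * m ℓ - S) 0 ≤ ∑ j, max (a ℓ j) (U - b ℓ j) := fun ℓ =>
    calc max (U * m ℓ - S) 0 ≤ max (Fintype.card (Fin (m ℓ)) * U - ∑ j, b ℓ j) 0 := by
          rw [Fintype.card_fin, mul_comm]
          gcongr
          exact hbS ℓ
      _ ≤ _ := max_card_mul_sub_sum_le_sum_max (fun j => (hab ℓ j).1) _ U
  unfold Ed thresholdCost
  gcongr
  exact hsum _

theorem exists_admissible_Ed_eq_thresholdCost (hm : ∀ ℓ, 1 ≤ m ℓ) (hU : 0 ≤ U) {T : ℝ}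
    (hT : 0 ≤ T) (hTv : ∃ ℓ, T ≤ U * m ℓ) :
    ∃ a b, Admissible m U a b ∧
      Ed d m U ε a b = (1 / ∑ ℓ, (m ℓ : ℝ)) * thresholdCost (fun ℓ => U * m ℓ) (2 * d / ε) T := by
  have hm' : ∀ ℓ, (0 : ℝ) < m ℓ := fun ℓ => by exact_mod_cast hm ℓ
  have hbU : ∀ ℓ, min T (U * m ℓ) / m ℓ ≤ U := fun ℓ =>
    (div_le_iff₀ (hm' ℓ)).2 (min_le_right _ _)
  refine ⟨fun _ _ => 0, fun ℓ _ => min T (U * m ℓ) / m ℓ,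
    fun ℓ _ => ⟨le_rfl, by positivity, hbU ℓ⟩, ?_⟩
  have hB : ∀ ℓ, ∑ _j : Fin (m ℓ), min T (U * m ℓ) / m ℓ = min T (U * m ℓ) := fun ℓ => by
    rw [sum_const, card_univ, Fintype.card_fin, nsmul_eq_mul, mul_div_cancel₀ _ (hm' ℓ).ne']
  have hS : sSup (Set.range fun ℓ => min T (U * m ℓ)) = T := by
    obtain ⟨ℓ₀, hℓ₀⟩ := hTv
    refine IsGreatest.csSup_eq ⟨⟨ℓ₀, min_eq_left hℓ₀⟩, ?_⟩
    rintro _ ⟨ℓ, rfl⟩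
    exact min_le_left _ _
  have hE : ∀ ℓ, ∑ _j : Fin (m ℓ), max 0 (U - min T (U * m ℓ) / m ℓ) = max (U * m ℓ - T) 0 :=
      fun ℓ => by
    rw [max_eq_right (sub_nonneg.2 (hbU ℓ)), sum_const, card_univ, Fintype.card_fin, nsmul_eq_mul,
      mul_sub, mul_div_cancel₀ _ (hm' ℓ).ne', mul_comm]
    rcases le_total T (U * m ℓ) with h | h
    · rw [min_eq_left h, max_eq_left (sub_nonneg.2 h)]
    · rw [min_eq_right h, max_eq_right (by linarith), sub_self]
  unfold Ed thresholdCost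
  simp only [hB, hS, hE]

end clipping

/-- optimal worst-case error, `d ≥ 2`.
The minimum of `E^(d)` over all admissible clipping strategies equals
`(1/M)·(∑_ℓ max{U m_ℓ − T, 0} + 2dT/ε)`, where `T` is the `⌈2d/ε⌉`-th largest value of
`{U·m_1, …, U·m_L}` (with `T = 0` if `⌈2d/ε⌉ > L`). -/
theorem stmt3 {d L : ℕ} (hd : 2 ≤ d) (hL : 0 < L) (m : Fin L → ℕ) (hm : ∀ ℓ, 1 ≤ m ℓ)
    (U ε : ℝ) (hU : 0 < U) (hε : 0 < ε)
    (T : ℝ) (hT : T = kthLargest (fun ℓ => U * (m ℓ : ℝ)) ⌈(2 * (d : ℝ)) / ε⌉₊) :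
    IsLeast {e : ℝ | ∃ a b, Admissible m U a b ∧ e = Ed d m U ε a b}
      ((1 / ∑ ℓ, (m ℓ : ℝ)) *
        ((∑ ℓ, max (U * (m ℓ : ℝ) - T) 0) + 2 * (d : ℝ) * T / ε)) := by
  set v : Fin L → ℝ := fun ℓ => U * m ℓ
  have hv : ∀ ℓ, 0 ≤ v ℓ := fun ℓ => by positivity
  have hc : 0 < 2 * (d : ℝ) / ε := by
    have : (0 : ℝ) < d := by exact_mod_cast (by omega : 0 < d)
    positivity
  have hval : (∑ ℓ, max (U * (m ℓ : ℝ) - T) 0) + 2 * (d : ℝ) * T / ε =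
      thresholdCost v (2 * d / ε) T := by
    rw [thresholdCost, mul_div_right_comm]
  rw [hval]
  obtain ⟨a, b, hab, hE⟩ := exists_admissible_Ed_eq_thresholdCost (d := d) (ε := ε) hm hU.le
    (hT ▸ kthLargest_nonneg v hv) (hT ▸ exists_kthLargest_le v hL hv)
  refine ⟨⟨a, b, hab, hE.symm⟩, ?_⟩
  rintro _ ⟨a, b, hab, rfl⟩
  refine le_trans (mul_le_mul_of_nonneg_left ?_ (by positivity)) (thresholdCost_sSup_le_Ed hab)
  rw [hT]
  refine thresholdCost_kthLargest_le v hc (Real.sSup_nonneg ?_)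
  rintro _ ⟨ℓ, rfl⟩
  exact sum_nonneg fun j _ => (hab ℓ j).1.trans (hab ℓ j).2.1
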